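/- The constructions between LR units and Saavedra units on a fixed object I are mutually inverse: starting from a Saavedra unit (I, α), the induced left and right constraints satisfy λ_I = α = ρ_I; and starting from an LR unit (I, λ, ρ), the constraints induced by α := λ_I = ρ_I coincide with the original λ and ρ. Hence there is a bijection between LR unit structures and Saavedra unit structures on I. -/
import Mathlib


open CategoryTheory

universe v u v' u'

/-- A strict semi-monoidal category: a category with an associative tensor product
(associativity strict on objects, expressed with `eqToHom` on morphisms). -/
structure SemiMonoidal (C : Type u) [Category.{v} C] where
  t : C → C → C
  h : {X₁ X₂ Y₁ Y₂ : C} → (X₁ ⟶ X₂) → (Y₁ ⟶ Y₂) → (t X₁ Y₁ ⟶ t X₂ Y₂)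
  h_id : ∀ X Y : C, h (𝟙 X) (𝟙 Y) = 𝟙 (t X Y)
  h_comp : ∀ {X₁ X₂ X₃ Y₁ Y₂ Y₃ : C} (f₁ : X₁ ⟶ X₂) (f₂ : X₂ ⟶ X₃)
      (g₁ : Y₁ ⟶ Y₂) (g₂ : Y₂ ⟶ Y₃),
      h (f₁ ≫ f₂) (g₁ ≫ g₂) = h f₁ g₁ ≫ h f₂ g₂
  assoc : ∀ X Y Z : C, t (t X Y) Z = t X (t Y Z)
  h_assoc : ∀ {X₁ X₂ Y₁ Y₂ Z₁ Z₂ : C} (f : X₁ ⟶ X₂) (g : Y₁ ⟶ Y₂) (k : Z₁ ⟶ Z₂),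
      h (h f g) k =
        eqToHom (assoc X₁ Y₁ Z₁) ≫ h f (h g k) ≫ eqToHom (assoc X₂ Y₂ Z₂).symm

variable {C : Type u} [Category.{v} C]

/-- An LR unit structure on `I`: natural isomorphisms `λ_X : I⊗X ≅ X`, `ρ_X : X⊗I ≅ X`
satisfying the four classical unit axioms. -/
structure IsLRUnit (M : SemiMonoidal C) (I : C)
    (lam : ∀ X : C, M.t I X ⟶ X) (rho : ∀ X : C, M.t X I ⟶ X) : Prop where
  lam_iso : ∀ X : C, IsIso (lam X)
  rho_iso : ∀ X : C, IsIso (rho X)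
  lam_nat : ∀ {X Y : C} (f : X ⟶ Y), M.h (𝟙 I) f ≫ lam Y = lam X ≫ f
  rho_nat : ∀ {X Y : C} (f : X ⟶ Y), M.h f (𝟙 I) ≫ rho Y = rho X ≫ f
  ax1 : lam I = rho I
  ax2 : ∀ X Y : C, M.h (lam X) (𝟙 Y) = eqToHom (M.assoc I X Y) ≫ lam (M.t X Y)
  ax3 : ∀ X Y : C, M.h (𝟙 X) (rho Y) = eqToHom (M.assoc X Y I).symm ≫ rho (M.t X Y)
  ax4 : ∀ X Y : C, M.h (𝟙 X) (lam Y) = eqToHom (M.assoc X I Y).symm ≫ M.h (rho X) (𝟙 Y)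

namespace SemiMonoidal

variable (M : SemiMonoidal C)

lemma h_eqL {X₁ X₂ Y : C} (p : X₁ = X₂) :
    M.h (eqToHom p) (𝟙 Y) = eqToHom (congrArg (fun Z => M.t Z Y) p) := by
  subst p; simp [M.h_id]

lemma h_eqR {X Y₁ Y₂ : C} (p : Y₁ = Y₂) :
    M.h (𝟙 X) (eqToHom p) = eqToHom (congrArg (M.t X) p) := by
  subst p; simp [M.h_id]

lemma h_idL_comp (X : C) {Y₁ Y₂ Y₃ : C} (a : Y₁ ⟶ Y₂) (b : Y₂ ⟶ Y₃) :
    M.h (𝟙 X) (a ≫ b) = M.h (𝟙 X) a ≫ M.h (𝟙 X) b := by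
  rw [← M.h_comp]; simp

lemma h_idR_comp (Y : C) {X₁ X₂ X₃ : C} (a : X₁ ⟶ X₂) (b : X₂ ⟶ X₃) :
    M.h (a ≫ b) (𝟙 Y) = M.h a (𝟙 Y) ≫ M.h b (𝟙 Y) := by
  rw [← M.h_comp]; simp

lemma h_exch {X₁ X₂ Y₁ Y₂ : C} (f : X₁ ⟶ X₂) (g : Y₁ ⟶ Y₂) :
    M.h (𝟙 X₁) g ≫ M.h f (𝟙 Y₂) = M.h f (𝟙 Y₁) ≫ M.h (𝟙 X₂) g := by
  rw [← M.h_comp, ← M.h_comp]; simp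

lemma h_isoR {X : C} {Y₁ Y₂ : C} (g : Y₁ ⟶ Y₂) [IsIso g] : IsIso (M.h (𝟙 X) g) :=
  ⟨M.h (𝟙 X) (inv g), by rw [← M.h_comp]; simp [M.h_id], by rw [← M.h_comp]; simp [M.h_id]⟩

lemma h_isoL {Y : C} {X₁ X₂ : C} (f : X₁ ⟶ X₂) [IsIso f] : IsIso (M.h f (𝟙 Y)) :=
  ⟨M.h (inv f) (𝟙 Y), by rw [← M.h_comp]; simp [M.h_id], by rw [← M.h_comp]; simp [M.h_id]⟩


lemma lam_nat' (M : SemiMonoidal C) (I : C) (α : M.t I I ⟶ I)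
    (ffL : ∀ X Y : C, Function.Bijective fun f : X ⟶ Y => M.h (𝟙 I) f)
    (lam : ∀ X : C, M.t I X ⟶ X)
    (hlam : ∀ X : C, M.h (𝟙 I) (lam X) = eqToHom (M.assoc I I X).symm ≫ M.h α (𝟙 X))
    {X Y : C} (f : X ⟶ Y) : M.h (𝟙 I) f ≫ lam Y = lam X ≫ f := by
  apply (ffL _ _).1
  show M.h (𝟙 I) (M.h (𝟙 I) f ≫ lam Y) = M.h (𝟙 I) (lam X ≫ f)
  rw [M.h_idL_comp, M.h_idL_comp, hlam, hlam]
  have ha : M.h (𝟙 I) (M.h (𝟙 I) f)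
      = eqToHom (M.assoc I I X).symm ≫ M.h (𝟙 (M.t I I)) f ≫ eqToHom (M.assoc I I Y) := by
    have hb := M.h_assoc (𝟙 I) (𝟙 I) f
    rw [M.h_id] at hb
    rw [hb]; simp
  rw [ha]
  simp only [Category.assoc, eqToHom_trans, eqToHom_trans_assoc, eqToHom_refl,
    Category.id_comp, Category.comp_id]
  rw [M.h_exch α f]

lemma lam_iso' (M : SemiMonoidal C) (I : C) (α : M.t I I ⟶ I) (hα : IsIso α)
    (ffL : ∀ X Y : C, Function.Bijective fun f : X ⟶ Y => M.h (𝟙 I) f)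
    (lam : ∀ X : C, M.t I X ⟶ X)
    (hlam : ∀ X : C, M.h (𝟙 I) (lam X) = eqToHom (M.assoc I I X).symm ≫ M.h α (𝟙 X))
    (X : C) : IsIso (lam X) := by
  haveI := hα
  haveI : IsIso (M.h α (𝟙 X)) := M.h_isoL α
  have hiso : IsIso (M.h (𝟙 I) (lam X)) := by rw [hlam]; infer_instance
  obtain ⟨g, hg⟩ := (ffL X (M.t I X)).2 (inv (M.h (𝟙 I) (lam X)))
  have hg' : M.h (𝟙 I) g = inv (M.h (𝟙 I) (lam X)) := hg
  refine ⟨g, ?_, ?_⟩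
  · apply (ffL _ _).1
    show M.h (𝟙 I) (lam X ≫ g) = M.h (𝟙 I) (𝟙 (M.t I X))
    rw [M.h_idL_comp, hg', M.h_id, IsIso.hom_inv_id]
  · apply (ffL _ _).1
    show M.h (𝟙 I) (g ≫ lam X) = M.h (𝟙 I) (𝟙 X)
    rw [M.h_idL_comp, hg', M.h_id, IsIso.inv_hom_id]

lemma lam_unit (M : SemiMonoidal C) (I : C) (α : M.t I I ⟶ I) (hα : IsIso α)
    (ffL : ∀ X Y : C, Function.Bijective fun f : X ⟶ Y => M.h (𝟙 I) f)
    (ffR : ∀ X Y : C, Function.Bijective fun f : X ⟶ Y => M.h f (𝟙 I))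
    (lam : ∀ X : C, M.t I X ⟶ X)
    (hlam : ∀ X : C, M.h (𝟙 I) (lam X) = eqToHom (M.assoc I I X).symm ≫ M.h α (𝟙 X)) :
    lam I = α := by
  haveI := lam_iso' M I α hα ffL lam hlam I
  have e1 : M.h (𝟙 I) (lam I) = lam (M.t I I) := by
    rw [← cancel_mono (lam I)]
    exact lam_nat' M I α ffL lam hlam (lam I)
  have e2 : M.h (lam I) (𝟙 I) = eqToHom (M.assoc I I I) ≫ lam (M.t I I) := by
    apply (ffL _ _).1
    show M.h (𝟙 I) (M.h (lam I) (𝟙 I))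
        = M.h (𝟙 I) (eqToHom (M.assoc I I I) ≫ lam (M.t I I))
    rw [M.h_idL_comp, M.h_eqR, hlam]
    have ha := M.h_assoc (𝟙 I) (lam I) (𝟙 I)
    rw [hlam] at ha
    rw [M.h_idR_comp, M.h_eqL] at ha
    have hb := M.h_assoc α (𝟙 I) (𝟙 I)
    rw [M.h_id] at hb
    rw [hb] at ha
    have ha' := ha.symm
    rw [eqToHom_comp_iff, comp_eqToHom_iff] at ha'
    rw [ha']
    simp [eqToHom_trans]
  have e3 := hlam I
  rw [e1] at e3
  apply (ffR _ _).1
  show M.h (lam I) (𝟙 I) = M.h α (𝟙 I)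
  rw [e2, e3]
  simp [eqToHom_trans]

lemma rho_nat' (M : SemiMonoidal C) (I : C) (α : M.t I I ⟶ I)
    (ffR : ∀ X Y : C, Function.Bijective fun f : X ⟶ Y => M.h f (𝟙 I))
    (rho : ∀ X : C, M.t X I ⟶ X)
    (hrho : ∀ X : C, M.h (rho X) (𝟙 I) = eqToHom (M.assoc X I I) ≫ M.h (𝟙 X) α)
    {X Y : C} (f : X ⟶ Y) : M.h f (𝟙 I) ≫ rho Y = rho X ≫ f := by
  apply (ffR _ _).1
  show M.h (M.h f (𝟙 I) ≫ rho Y) (𝟙 I) = M.h (rho X ≫ f) (𝟙 I)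
  rw [M.h_idR_comp, M.h_idR_comp, hrho, hrho]
  have ha : M.h (M.h f (𝟙 I)) (𝟙 I)
      = eqToHom (M.assoc X I I) ≫ M.h f (𝟙 (M.t I I)) ≫ eqToHom (M.assoc Y I I).symm := by
    have hb := M.h_assoc f (𝟙 I) (𝟙 I)
    rw [M.h_id] at hb
    rw [hb]
  rw [ha]
  simp only [Category.assoc, eqToHom_trans, eqToHom_trans_assoc, eqToHom_refl,
    Category.id_comp, Category.comp_id]
  rw [← M.h_exch f α]

lemma rho_iso' (M : SemiMonoidal C) (I : C) (α : M.t I I ⟶ I) (hα : IsIso α)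
    (ffR : ∀ X Y : C, Function.Bijective fun f : X ⟶ Y => M.h f (𝟙 I))
    (rho : ∀ X : C, M.t X I ⟶ X)
    (hrho : ∀ X : C, M.h (rho X) (𝟙 I) = eqToHom (M.assoc X I I) ≫ M.h (𝟙 X) α)
    (X : C) : IsIso (rho X) := by
  haveI := hα
  haveI : IsIso (M.h (𝟙 X) α) := M.h_isoR α
  have hiso : IsIso (M.h (rho X) (𝟙 I)) := by rw [hrho]; infer_instance
  obtain ⟨g, hg⟩ := (ffR X (M.t X I)).2 (inv (M.h (rho X) (𝟙 I)))
  have hg' : M.h g (𝟙 I) = inv (M.h (rho X) (𝟙 I)) := hg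
  refine ⟨g, ?_, ?_⟩
  · apply (ffR _ _).1
    show M.h (rho X ≫ g) (𝟙 I) = M.h (𝟙 (M.t X I)) (𝟙 I)
    rw [M.h_idR_comp, hg', M.h_id, IsIso.hom_inv_id]
  · apply (ffR _ _).1
    show M.h (g ≫ rho X) (𝟙 I) = M.h (𝟙 X) (𝟙 I)
    rw [M.h_idR_comp, hg', M.h_id, IsIso.inv_hom_id]

lemma rho_unit (M : SemiMonoidal C) (I : C) (α : M.t I I ⟶ I) (hα : IsIso α)
    (ffL : ∀ X Y : C, Function.Bijective fun f : X ⟶ Y => M.h (𝟙 I) f)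
    (ffR : ∀ X Y : C, Function.Bijective fun f : X ⟶ Y => M.h f (𝟙 I))
    (rho : ∀ X : C, M.t X I ⟶ X)
    (hrho : ∀ X : C, M.h (rho X) (𝟙 I) = eqToHom (M.assoc X I I) ≫ M.h (𝟙 X) α) :
    rho I = α := by
  haveI := rho_iso' M I α hα ffR rho hrho I
  have e1 : M.h (rho I) (𝟙 I) = rho (M.t I I) := by
    rw [← cancel_mono (rho I)]
    exact rho_nat' M I α ffR rho hrho (rho I)
  have e2 : M.h (𝟙 I) (rho I) = eqToHom (M.assoc I I I).symm ≫ rho (M.t I I) := by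
    apply (ffR _ _).1
    show M.h (M.h (𝟙 I) (rho I)) (𝟙 I)
        = M.h (eqToHom (M.assoc I I I).symm ≫ rho (M.t I I)) (𝟙 I)
    rw [M.h_idR_comp, M.h_eqL, hrho]
    have ha := M.h_assoc (𝟙 I) (rho I) (𝟙 I)
    rw [hrho] at ha
    rw [M.h_idL_comp, M.h_eqR] at ha
    have hb := M.h_assoc (𝟙 I) (𝟙 I) α
    rw [M.h_id] at hb
    have hb' := hb.symm
    rw [eqToHom_comp_iff, comp_eqToHom_iff] at hb'
    rw [hb'] at ha
    rw [ha]
    simp [eqToHom_trans]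
  have e3 := hrho I
  rw [e1] at e3
  apply (ffL _ _).1
  show M.h (𝟙 I) (rho I) = M.h (𝟙 I) α
  rw [e2, e3]
  simp [eqToHom_trans]

end SemiMonoidal

/-- The constructions between Saavedra units and LR units are mutually inverse:
the constraints induced by a Saavedra unit `(I, α)` satisfy `λ_I = α = ρ_I`,
and the constraints of an LR unit `(J, λ', ρ')` satisfy the defining equations
of the constraints induced by `α' := λ'_J`. -/
theorem stmt12 (M : SemiMonoidal C)
    (I : C) (α : M.t I I ⟶ I) (hα : IsIso α)
    (ffL : ∀ X Y : C, Function.Bijective fun f : X ⟶ Y => M.h (𝟙 I) f)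
    (ffR : ∀ X Y : C, Function.Bijective fun f : X ⟶ Y => M.h f (𝟙 I))
    (lam : ∀ X : C, M.t I X ⟶ X) (rho : ∀ X : C, M.t X I ⟶ X)
    (hlam : ∀ X : C, M.h (𝟙 I) (lam X) = eqToHom (M.assoc I I X).symm ≫ M.h α (𝟙 X))
    (hrho : ∀ X : C, M.h (rho X) (𝟙 I) = eqToHom (M.assoc X I I) ≫ M.h (𝟙 X) α)
    (J : C) (lam' : ∀ X : C, M.t J X ⟶ X) (rho' : ∀ X : C, M.t X J ⟶ X)
    (hJ : IsLRUnit M J lam' rho') :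
    (lam I = α ∧ rho I = α) ∧
    ((∀ X : C,
        M.h (𝟙 J) (lam' X) = eqToHom (M.assoc J J X).symm ≫ M.h (lam' J) (𝟙 X)) ∧
     (∀ X : C,
        M.h (rho' X) (𝟙 J) = eqToHom (M.assoc X J J) ≫ M.h (𝟙 X) (lam' J))) := by
  refine ⟨⟨SemiMonoidal.lam_unit M I α hα ffL ffR lam hlam,
      SemiMonoidal.rho_unit M I α hα ffL ffR rho hrho⟩, ?_, ?_⟩
  · intro X
    rw [hJ.ax1]
    exact hJ.ax4 J X
  · intro X
    have h1 : M.h (rho' X) (𝟙 J) = rho' (M.t X J) := by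
      haveI := hJ.rho_iso X
      rw [← cancel_mono (rho' X)]
      exact hJ.rho_nat (rho' X)
    rw [h1, hJ.ax1, hJ.ax3]
    simp [eqToHom_trans]
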